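/- arXiv:2402.08282 — 4 statements merged into one kernel-verified Lean document; each statement's English description precedes it below -/
import Mathlib

section
/- For all chains θ, θ' ∈ Θ and every formula φ for which the displayed formulas are in the language, the formulas A_θφ → C_{θ'} A_θφ and ¬A_θφ → C_{θ'} ¬A_θφ are valid (hence so are the axioms KA: A_θφ → ⋀_{θ'∈Θ} C_{θ'} A_θφ and NKA: ¬A_θφ → ⋀_{θ'∈Θ} C_{θ'} ¬A_θφ). -/
namespace ALPC

/-- A chain of belief for awareness: a nonempty finite sequence of agents. -/
def Chain (G : Type) : Type := {l : List G // l ≠ []}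

/-- The last agent of a chain. -/
def Chain.last {G : Type} (θ : Chain G) : G := θ.val.getLast θ.prop

/-- Concatenation of chains. -/
def Chain.append {G : Type} (θ θ' : Chain G) : Chain G :=
  ⟨θ.val ++ θ'.val, by cases θ; cases θ'; simp_all⟩

/-- The order ⪯ on chains: the partial order generated by the conditions that
θ ⪯ θ·θ'' and that a chain with two adjacent occurrences of the same agent is
equivalent (related in both directions) to the chain with one of them removed. -/
inductive ChainLE {G : Type} : Chain G → Chain G → Prop
  | refl (θ : Chain G) : ChainLE θ θ
  | ext (θ θ'' : Chain G) : ChainLE θ (θ.append θ'')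
  | dup_le (pre suf : List G) (a : G) :
      ChainLE ⟨pre ++ a :: a :: suf, by simp⟩ ⟨pre ++ a :: suf, by simp⟩
  | dup_ge (pre suf : List G) (a : G) :
      ChainLE ⟨pre ++ a :: suf, by simp⟩ ⟨pre ++ a :: a :: suf, by simp⟩
  | trans {θ₁ θ₂ θ₃ : Chain G} : ChainLE θ₁ θ₂ → ChainLE θ₂ θ₃ → ChainLE θ₁ θ₃

/-- Formulas of the language: atoms, negation, conjunction, implicit knowledge I_i,
the operator [≈]_θ (`box`), the operator C_θ, awareness A_θ and explicit knowledge E_θ. -/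
inductive Formula (P G : Type) : Type
  | atom : P → Formula P G
  | neg : Formula P G → Formula P G
  | and : Formula P G → Formula P G → Formula P G
  | K : G → Formula P G → Formula P G
  | box : Chain G → Formula P G → Formula P G
  | C : Chain G → Formula P G → Formula P G
  | A : Chain G → Formula P G → Formula P G
  | E : Chain G → Formula P G → Formula P G

variable {P G : Type}

/-- Material implication, defined from ¬ and ∧. -/
def Formula.imp (φ ψ : Formula P G) : Formula P G := (φ.and ψ.neg).neg

/-- Biconditional. -/
def Formula.iff (φ ψ : Formula P G) : Formula P G := (φ.imp ψ).and (ψ.imp φ)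

/-- At(φ): the set of atomic propositions occurring in φ. -/
def Formula.At : Formula P G → Set P
  | .atom p => {p}
  | .neg φ => φ.At
  | .and φ ψ => φ.At ∪ ψ.At
  | .K _ φ => φ.At
  | .box _ φ => φ.At
  | .C _ φ => φ.At
  | .A _ φ => φ.At
  | .E _ φ => φ.At

/-- The set of chains occurring as operator subscripts in a formula. -/
def Formula.chains : Formula P G → Set (Chain G)
  | .atom _ => ∅
  | .neg φ => φ.chains
  | .and φ ψ => φ.chains ∪ ψ.chains
  | .K _ φ => φ.chains
  | .box θ φ => insert θ φ.chains
  | .C θ φ => insert θ φ.chains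
  | .A θ φ => insert θ φ.chains
  | .E θ φ => insert θ φ.chains

/-- Well-formedness: φ belongs to the language 𝓛_(P,G,Θ); every operator subscript
is a chain in Θ, and in A_θ φ and E_θ φ every operator subscript θ' occurring in φ
satisfies θ ⪯ θ'. -/
def WF (Θ : Set (Chain G)) : Formula P G → Prop
  | .atom _ => True
  | .neg φ => WF Θ φ
  | .and φ ψ => WF Θ φ ∧ WF Θ ψ
  | .K _ φ => WF Θ φ
  | .box θ φ => θ ∈ Θ ∧ WF Θ φ
  | .C θ φ => θ ∈ Θ ∧ WF Θ φ
  | .A θ φ => θ ∈ Θ ∧ WF Θ φ ∧ ∀ θ' ∈ φ.chains, ChainLE θ θ'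
  | .E θ φ => θ ∈ Θ ∧ WF Θ φ ∧ ∀ θ' ∈ φ.chains, ChainLE θ θ'

/-- The raw data of a Kripke-style model for the language. -/
structure RawModel (P G : Type) where
  W : Type
  sim : G → W → W → Prop
  V : P → Set W
  Aw : Chain G → Set P

/-- The indistinguishable relation ≈_θ induced by the awareness set 𝒜_θ. -/
def RawModel.indist (M : RawModel P G) (θ : Chain G) (w v : M.W) : Prop :=
  ∀ p ∈ M.Aw θ, (w ∈ M.V p ↔ v ∈ M.V p)

/-- The transitive closure of ∼_i ∘ ≈_θ (i the last agent of θ), where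
(x,y) ∈ ∼_i ∘ ≈_θ iff there is u with x ≈_θ u and u ∼_i y. -/
def RawModel.creach (M : RawModel P G) (θ : Chain G) : M.W → M.W → Prop :=
  Relation.TransGen (fun x y => ∃ u, M.indist θ x u ∧ M.sim θ.last u y)

/-- The satisfaction relation M,w ⊨ φ. -/
def Sat (M : RawModel P G) : Formula P G → M.W → Prop
  | .atom p, w => w ∈ M.V p
  | .neg φ, w => ¬ Sat M φ w
  | .and φ ψ, w => Sat M φ w ∧ Sat M ψ w
  | .K i φ, w => ∀ v, M.sim i w v → Sat M φ v
  | .box θ φ, w => ∀ v, M.indist θ w v → Sat M φ v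
  | .C θ φ, w => ∀ v, M.creach θ w v → Sat M φ v
  | .A θ φ, _ => Formula.At φ ⊆ M.Aw θ
  | .E θ φ, w => Formula.At φ ⊆ M.Aw θ ∧ ∀ v, M.creach θ w v → Sat M φ v

/-- An epistemic model with awareness: a nonempty set of worlds, equivalence
relations ∼_i, a valuation, and nonempty awareness sets 𝒜_θ (θ ∈ Θ) with
𝒜_θ ⊆ 𝒜_θ' whenever θ' ⪯ θ. -/
structure AwModel (P G : Type) (Θ : Set (Chain G)) extends RawModel P G where
  W_ne : Nonempty W
  sim_equiv : ∀ i : G, Equivalence (sim i)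
  Aw_ne : ∀ θ ∈ Θ, (Aw θ).Nonempty
  Aw_mono : ∀ θ ∈ Θ, ∀ θ' ∈ Θ, ChainLE θ' θ → Aw θ ⊆ Aw θ'

/-- Validity: φ holds at every world of every epistemic model with awareness. -/
def Valid (Θ : Set (Chain G)) (φ : Formula P G) : Prop :=
  ∀ M : AwModel P G Θ, ∀ w : M.W, Sat M.toRawModel φ w


/-- Conjunction of a nonempty list of formulas, given as head and tail. -/
def conjList (f : Formula P G) : List (Formula P G) → Formula P G
  | [] => f
  | g :: l => f.and (conjList g l)

/-- Boolean evaluation of the propositional skeleton of a formula, treating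
non-Boolean formulas as propositional atoms. -/
def propEval (v : Formula P G → Bool) : Formula P G → Bool
  | .neg φ => !(propEval v φ)
  | .and φ ψ => propEval v φ && propEval v ψ
  | φ => v φ

/-- φ is a propositional tautology. -/
def Tautology (φ : Formula P G) : Prop := ∀ v, propEval v φ = true

/-- The Hilbert system ALPC. -/
inductive Provable (Θ : Set (Chain G)) : Formula P G → Prop
  | taut {φ : Formula P G} : Tautology φ → WF Θ φ → Provable Θ φ
  | AN {θ : Chain G} {φ : Formula P G} :
      WF Θ ((Formula.A θ φ).iff (Formula.A θ φ.neg)) →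
      Provable Θ ((Formula.A θ φ).iff (Formula.A θ φ.neg))
  | ACN {θ : Chain G} {φ ψ : Formula P G} :
      WF Θ ((Formula.A θ (φ.and ψ)).iff ((Formula.A θ φ).and (Formula.A θ ψ))) →
      Provable Θ ((Formula.A θ (φ.and ψ)).iff ((Formula.A θ φ).and (Formula.A θ ψ)))
  | AA {θ θ' : Chain G} {φ : Formula P G} :
      WF Θ ((Formula.A θ φ).iff (Formula.A θ (Formula.A θ' φ))) →
      Provable Θ ((Formula.A θ φ).iff (Formula.A θ (Formula.A θ' φ)))
  | AL {θ : Chain G} {i : G} {φ : Formula P G} :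
      WF Θ ((Formula.A θ φ).iff (Formula.A θ (Formula.K i φ))) →
      Provable Θ ((Formula.A θ φ).iff (Formula.A θ (Formula.K i φ)))
  | Abox {θ θ' : Chain G} {φ : Formula P G} :
      WF Θ ((Formula.A θ φ).iff (Formula.A θ (Formula.box θ' φ))) →
      Provable Θ ((Formula.A θ φ).iff (Formula.A θ (Formula.box θ' φ)))
  | ACM {θ θ' : Chain G} {φ : Formula P G} :
      WF Θ ((Formula.A θ φ).iff (Formula.A θ (Formula.C θ' φ))) →
      Provable Θ ((Formula.A θ φ).iff (Formula.A θ (Formula.C θ' φ)))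
  | AK {θ θ' : Chain G} {φ : Formula P G} :
      WF Θ ((Formula.A θ φ).iff (Formula.A θ (Formula.E θ' φ))) →
      Provable Θ ((Formula.A θ φ).iff (Formula.A θ (Formula.E θ' φ)))
  | ANbox {θ : Chain G} {p : P} :
      WF Θ (((Formula.A θ (Formula.atom p)).and (Formula.atom p)).imp
        (Formula.box θ (Formula.atom p))) →
      Provable Θ (((Formula.A θ (Formula.atom p)).and (Formula.atom p)).imp
        (Formula.box θ (Formula.atom p)))
  | AI {θ θ' : Chain G} {φ : Formula P G} :
      ChainLE θ' θ →
      WF Θ ((Formula.A θ φ).imp (Formula.A θ' φ)) →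
      Provable Θ ((Formula.A θ φ).imp (Formula.A θ' φ))
  | KA {θ : Chain G} {φ : Formula P G} (θ₀ : Chain G) (l : List (Chain G)) :
      (∀ x, x ∈ θ₀ :: l ↔ x ∈ Θ) →
      WF Θ (Formula.A θ φ) →
      Provable Θ ((Formula.A θ φ).imp
        (conjList (Formula.C θ₀ (Formula.A θ φ))
          (l.map fun θ' => Formula.C θ' (Formula.A θ φ))))
  | NKA {θ : Chain G} {φ : Formula P G} (θ₀ : Chain G) (l : List (Chain G)) :
      (∀ x, x ∈ θ₀ :: l ↔ x ∈ Θ) →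
      WF Θ (Formula.A θ φ) →
      Provable Θ (((Formula.A θ φ).neg).imp
        (conjList (Formula.C θ₀ ((Formula.A θ φ).neg))
          (l.map fun θ' => Formula.C θ' ((Formula.A θ φ).neg))))
  | K_I {i : G} {φ ψ : Formula P G} :
      WF Θ ((Formula.K i (φ.imp ψ)).imp ((Formula.K i φ).imp (Formula.K i ψ))) →
      Provable Θ ((Formula.K i (φ.imp ψ)).imp ((Formula.K i φ).imp (Formula.K i ψ)))
  | T_I {i : G} {φ : Formula P G} :
      WF Θ ((Formula.K i φ).imp φ) →
      Provable Θ ((Formula.K i φ).imp φ)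
  | five_I {i : G} {φ : Formula P G} :
      WF Θ (((Formula.K i φ).neg).imp (Formula.K i ((Formula.K i φ).neg))) →
      Provable Θ (((Formula.K i φ).neg).imp (Formula.K i ((Formula.K i φ).neg)))
  | K_box {θ : Chain G} {φ ψ : Formula P G} :
      WF Θ ((Formula.box θ (φ.imp ψ)).imp ((Formula.box θ φ).imp (Formula.box θ ψ))) →
      Provable Θ ((Formula.box θ (φ.imp ψ)).imp ((Formula.box θ φ).imp (Formula.box θ ψ)))
  | T_box {θ : Chain G} {φ : Formula P G} :
      WF Θ ((Formula.box θ φ).imp φ) →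
      Provable Θ ((Formula.box θ φ).imp φ)
  | five_box {θ : Chain G} {φ : Formula P G} :
      WF Θ (((Formula.box θ φ).neg).imp (Formula.box θ ((Formula.box θ φ).neg))) →
      Provable Θ (((Formula.box θ φ).neg).imp (Formula.box θ ((Formula.box θ φ).neg)))
  | K_C {θ : Chain G} {φ ψ : Formula P G} :
      WF Θ ((Formula.C θ (φ.imp ψ)).imp ((Formula.C θ φ).imp (Formula.C θ ψ))) →
      Provable Θ ((Formula.C θ (φ.imp ψ)).imp ((Formula.C θ φ).imp (Formula.C θ ψ)))
  | MIX {θ : Chain G} {φ : Formula P G} :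
      WF Θ ((Formula.C θ φ).imp
        (φ.and (Formula.box θ (Formula.K (Chain.last θ) (Formula.C θ φ))))) →
      Provable Θ ((Formula.C θ φ).imp
        (φ.and (Formula.box θ (Formula.K (Chain.last θ) (Formula.C θ φ)))))
  | IND {θ : Chain G} {φ : Formula P G} :
      WF Θ ((Formula.C θ (φ.imp (Formula.box θ (Formula.K (Chain.last θ) φ)))).imp
        (φ.imp (Formula.C θ φ))) →
      Provable Θ ((Formula.C θ (φ.imp (Formula.box θ (Formula.K (Chain.last θ) φ)))).imp
        (φ.imp (Formula.C θ φ)))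
  | KAC {θ : Chain G} {φ : Formula P G} :
      WF Θ ((Formula.E θ φ).iff ((Formula.A θ φ).and (Formula.C θ φ))) →
      Provable Θ ((Formula.E θ φ).iff ((Formula.A θ φ).and (Formula.C θ φ)))
  | mp {φ ψ : Formula P G} : Provable Θ (φ.imp ψ) → Provable Θ φ → Provable Θ ψ
  | necK {i : G} {φ : Formula P G} : Provable Θ φ → Provable Θ (Formula.K i φ)
  | necBox {θ : Chain G} {φ : Formula P G} : θ ∈ Θ → Provable Θ φ → Provable Θ (Formula.box θ φ)
  | necC {θ : Chain G} {φ : Formula P G} : θ ∈ Θ → Provable Θ φ → Provable Θ (Formula.C θ φ)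

/-- Γ ⊢ φ: there is a finite subset Γ' of Γ with ⊢ ⋀Γ' → φ. -/
def Deduces (Θ : Set (Chain G)) (Γ : Set (Formula P G)) (φ : Formula P G) : Prop :=
  Provable Θ φ ∨ ∃ (ψ : Formula P G) (l : List (Formula P G)),
    ψ ∈ Γ ∧ (∀ χ ∈ l, χ ∈ Γ) ∧ Provable Θ ((conjList ψ l).imp φ)

/-- Γ ⊢ ⊥: Γ deduces a contradiction. -/
def Inconsistent (Θ : Set (Chain G)) (Γ : Set (Formula P G)) : Prop :=
  ∃ χ, Deduces Θ Γ χ ∧ Deduces Θ Γ χ.neg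

/-- Γ is a consistent set in Φ. -/
def ConsistentIn (Θ : Set (Chain G)) (Φ Γ : Set (Formula P G)) : Prop :=
  Γ ⊆ Φ ∧ ¬ Inconsistent Θ Γ

/-- Γ is a maximal consistent set in Φ: no consistent set in Φ properly contains Γ. -/
def MCSIn (Θ : Set (Chain G)) (Φ Γ : Set (Formula P G)) : Prop :=
  ConsistentIn Θ Φ Γ ∧ ∀ Δ, ConsistentIn Θ Φ Δ → Γ ⊆ Δ → Δ = Γ

/-- Subformula relation: `Subf χ φ` means χ is a subformula of φ. -/
inductive Subf : Formula P G → Formula P G → Prop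
  | refl (φ : Formula P G) : Subf φ φ
  | neg {χ φ : Formula P G} : Subf χ φ → Subf χ (Formula.neg φ)
  | andL {χ φ ψ : Formula P G} : Subf χ φ → Subf χ (Formula.and φ ψ)
  | andR {χ φ ψ : Formula P G} : Subf χ ψ → Subf χ (Formula.and φ ψ)
  | K {χ φ : Formula P G} {i : G} : Subf χ φ → Subf χ (Formula.K i φ)
  | box {χ φ : Formula P G} {θ : Chain G} : Subf χ φ → Subf χ (Formula.box θ φ)
  | C {χ φ : Formula P G} {θ : Chain G} : Subf χ φ → Subf χ (Formula.C θ φ)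
  | A {χ φ : Formula P G} {θ : Chain G} : Subf χ φ → Subf χ (Formula.A θ φ)
  | E {χ φ : Formula P G} {θ : Chain G} : Subf χ φ → Subf χ (Formula.E θ φ)

/-- φ has the form of a negation. -/
def Formula.isNeg : Formula P G → Prop
  | .neg _ => True
  | _ => False

/-- The closure cl(φ), as an inductively generated (hence smallest) set. -/
inductive InCl (Θ : Set (Chain G)) (φ : Formula P G) : Formula P G → Prop
  | self : InCl Θ φ φ
  | sub {ψ χ : Formula P G} : InCl Θ φ ψ → Subf χ ψ → InCl Θ φ χ
  | neg {ψ : Formula P G} : InCl Θ φ ψ → ¬ Formula.isNeg ψ → InCl Θ φ (Formula.neg ψ)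
  | CA {θ : Chain G} {ψ : Formula P G} (θ' : Chain G) :
      InCl Θ φ (Formula.A θ ψ) → θ' ∈ Θ → InCl Θ φ (Formula.C θ' (Formula.A θ ψ))
  | CnA {θ : Chain G} {ψ : Formula P G} (θ' : Chain G) :
      InCl Θ φ (Formula.A θ ψ) → θ' ∈ Θ →
      InCl Θ φ (Formula.C θ' (Formula.neg (Formula.A θ ψ)))
  | boxAtom {θ : Chain G} {ψ : Formula P G} {p : P} :
      InCl Θ φ (Formula.A θ ψ) → InCl Θ φ (Formula.atom p) →
      InCl Θ φ (Formula.box θ (Formula.atom p))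
  | Asub {θ : Chain G} {ψ χ : Formula P G} :
      InCl Θ φ (Formula.A θ ψ) → Subf χ ψ → InCl Θ φ (Formula.A θ χ)
  | Achain {θ : Chain G} {ψ : Formula P G} (θ' : Chain G) :
      InCl Θ φ (Formula.A θ ψ) → θ' ∈ Θ → InCl Θ φ (Formula.A θ' ψ)
  | KK {i : G} {ψ : Formula P G} :
      Subf (Formula.K i ψ) φ → InCl Θ φ (Formula.K i (Formula.K i ψ))
  | KnK {i : G} {ψ : Formula P G} :
      Subf (Formula.K i ψ) φ → InCl Θ φ (Formula.K i (Formula.neg (Formula.K i ψ)))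
  | boxbox {θ : Chain G} {ψ : Formula P G} :
      Subf (Formula.box θ ψ) φ → InCl Θ φ (Formula.box θ (Formula.box θ ψ))
  | boxnbox {θ : Chain G} {ψ : Formula P G} :
      Subf (Formula.box θ ψ) φ → InCl Θ φ (Formula.box θ (Formula.neg (Formula.box θ ψ)))
  | CboxKC {θ : Chain G} {ψ : Formula P G} :
      InCl Θ φ (Formula.C θ ψ) →
      InCl Θ φ (Formula.box θ (Formula.K (Chain.last θ) (Formula.C θ ψ)))
  | KC1 {i : G} {θ : Chain G} {ψ : Formula P G} :
      InCl Θ φ (Formula.K i (Formula.C θ ψ)) →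
      InCl Θ φ (Formula.K i (Formula.K i (Formula.C θ ψ)))
  | KC2 {i : G} {θ : Chain G} {ψ : Formula P G} :
      InCl Θ φ (Formula.K i (Formula.C θ ψ)) →
      InCl Θ φ (Formula.K i (Formula.neg (Formula.K i (Formula.C θ ψ))))
  | boxKC1 {θ : Chain G} {i : G} {ψ : Formula P G} :
      InCl Θ φ (Formula.box θ (Formula.K i (Formula.C θ ψ))) →
      InCl Θ φ (Formula.box θ (Formula.box θ (Formula.K i (Formula.C θ ψ))))
  | boxKC2 {θ : Chain G} {i : G} {ψ : Formula P G} :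
      InCl Θ φ (Formula.box θ (Formula.K i (Formula.C θ ψ))) →
      InCl Θ φ (Formula.box θ (Formula.neg (Formula.box θ (Formula.K i (Formula.C θ ψ)))))
  | EA {θ : Chain G} {ψ : Formula P G} : InCl Θ φ (Formula.E θ ψ) → InCl Θ φ (Formula.A θ ψ)
  | EC {θ : Chain G} {ψ : Formula P G} : InCl Θ φ (Formula.E θ ψ) → InCl Θ φ (Formula.C θ ψ)

/-- The closure cl(φ) as a set of formulas. -/
def cl (Θ : Set (Chain G)) (φ : Formula P G) : Set (Formula P G) := {ψ | InCl Θ φ ψ}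

/-- (Γ,Δ) ∈ (∼_i)*: {χ | I_iχ ∈ Γ} ⊆ Δ. -/
def simStar (i : G) (Γ Δ : Set (Formula P G)) : Prop := ∀ χ, Formula.K i χ ∈ Γ → χ ∈ Δ

/-- (Γ,Δ) ∈ (≈_θ)*: {χ | [≈]_θχ ∈ Γ} ⊆ Δ. -/
def boxStar (θ : Chain G) (Γ Δ : Set (Formula P G)) : Prop :=
  ∀ χ, Formula.box θ χ ∈ Γ → χ ∈ Δ

/-- The union over i ∈ G and θ ∈ Θ of the compositions (∼_i)* ∘ (≈_θ)* on
maximal consistent sets in Φ. -/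
def baseRel (Θ : Set (Chain G)) (Φ : Set (Formula P G)) (X Y : Set (Formula P G)) : Prop :=
  ∃ i : G, ∃ θ ∈ Θ, ∃ U, MCSIn Θ Φ U ∧ boxStar θ X U ∧ simStar i U Y

/-- The domain W*_Λ of the divided model M*_Λ. -/
def WL (Θ : Set (Chain G)) (Φ Λ : Set (Formula P G)) : Set (Set (Formula P G)) :=
  {Γ | MCSIn Θ Φ Γ ∧ Relation.TransGen (baseRel Θ Φ) Λ Γ}

/-- One step of a (C_θ)_Λ-path: the composition (∼_i)*_Λ ∘ (≈_θ)*_Λ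
(i the last agent of θ) restricted to W*_Λ. -/
def stepL (Θ : Set (Chain G)) (Φ Λ : Set (Formula P G)) (θ : Chain G)
    (X Y : Set (Formula P G)) : Prop :=
  X ∈ WL Θ Φ Λ ∧ Y ∈ WL Θ Φ Λ ∧
    ∃ U ∈ WL Θ Φ Λ, boxStar θ X U ∧ simStar (Chain.last θ) U Y

/-- The divided model M*_Λ (as raw model data), with relations (∼_i)*_Λ,
awareness sets (𝒜_θ)*_Λ and valuation V*_Λ. -/
def dividedModel (Θ : Set (Chain G)) (Φ Λ : Set (Formula P G)) : RawModel P G where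
  W := {Γ : Set (Formula P G) // Γ ∈ WL Θ Φ Λ}
  sim i x y := simStar i x.val y.val
  V p := {x | Formula.atom p ∈ x.val}
  Aw θ := {p | ∀ Γ ∈ WL Θ Φ Λ, Formula.A θ (Formula.atom p) ∈ Γ}

def IsWorldInvariant (M : RawModel P G) (ψ : Formula P G) : Prop :=
  ∀ w v, Sat M ψ w → Sat M ψ v

theorem isWorldInvariant_A (M : RawModel P G) (θ : Chain G) (φ : Formula P G) :
    IsWorldInvariant M (Formula.A θ φ) :=
  fun _ _ h => h

theorem IsWorldInvariant.neg {M : RawModel P G} {ψ : Formula P G}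
    (h : IsWorldInvariant M ψ) : IsWorldInvariant M ψ.neg :=
  fun w v hw hv => hw (h v w hv)

theorem IsWorldInvariant.sat_C {M : RawModel P G} {ψ : Formula P G}
    (h : IsWorldInvariant M ψ) (τ : Chain G) {w : M.W} (hw : Sat M ψ w) :
    Sat M (Formula.C τ ψ) w :=
  fun v _ => h w v hw

theorem sat_imp {M : RawModel P G} {φ ψ : Formula P G} {w : M.W} :
    Sat M (φ.imp ψ) w ↔ (Sat M φ w → Sat M ψ w) := by
  simp only [Formula.imp, Sat, not_and, not_not]

theorem sat_conjList_map {M : RawModel P G} {α : Type} (f : α → Formula P G) (a : α)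
    (l : List α) {w : M.W} (h : ∀ b ∈ a :: l, Sat M (f b) w) :
    Sat M (conjList (f a) (l.map f)) w := by
  induction l generalizing a with
  | nil => exact h a List.mem_cons_self
  | cons b l ih =>
    exact ⟨h a List.mem_cons_self, ih b fun c hc => h c (List.mem_cons_of_mem a hc)⟩

theorem valid_imp_conjList_C {Θ : Set (Chain G)} {ψ : Formula P G}
    (h : ∀ M : AwModel P G Θ, IsWorldInvariant M.toRawModel ψ) (θ₀ : Chain G)
    (l : List (Chain G)) :
    Valid Θ (ψ.imp (conjList (Formula.C θ₀ ψ) (l.map fun τ => Formula.C τ ψ))) :=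
  fun M _ => sat_imp.2 fun hw =>
    sat_conjList_map (fun τ => Formula.C τ ψ) θ₀ l fun τ _ => (h M).sat_C τ hw

theorem KA_NKA_valid_general {P G : Type} {Θ : Set (Chain G)} (θ θ' : Chain G) (φ : Formula P G) :
    Valid Θ ((Formula.A θ φ).imp (Formula.C θ' (Formula.A θ φ))) ∧
    Valid Θ (((Formula.A θ φ).neg).imp (Formula.C θ' ((Formula.A θ φ).neg))) ∧
    (∀ (θ₀ : Chain G) (l : List (Chain G)), (∀ x, x ∈ θ₀ :: l ↔ x ∈ Θ) →
      Valid Θ ((Formula.A θ φ).imp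
        (conjList (Formula.C θ₀ (Formula.A θ φ))
          (l.map fun τ => Formula.C τ (Formula.A θ φ))))) ∧
    (∀ (θ₀ : Chain G) (l : List (Chain G)), (∀ x, x ∈ θ₀ :: l ↔ x ∈ Θ) →
      Valid Θ (((Formula.A θ φ).neg).imp
        (conjList (Formula.C θ₀ ((Formula.A θ φ).neg))
          (l.map fun τ => Formula.C τ ((Formula.A θ φ).neg))))) := by
  have hA : ∀ M : AwModel P G Θ, IsWorldInvariant M.toRawModel (Formula.A θ φ) :=
    fun M => isWorldInvariant_A M.toRawModel θ φ
  have hnA : ∀ M : AwModel P G Θ, IsWorldInvariant M.toRawModel (Formula.A θ φ).neg :=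
    fun M => (hA M).neg
  -- `conjList f [] = f`, so the single-chain formulas are the case `l = []`.
  exact ⟨valid_imp_conjList_C hA θ' [], valid_imp_conjList_C hnA θ' [],
    fun θ₀ l _ => valid_imp_conjList_C hA θ₀ l, fun θ₀ l _ => valid_imp_conjList_C hnA θ₀ l⟩

/-- A_θφ → C_θ' A_θφ and ¬A_θφ → C_θ' ¬A_θφ are valid for every θ' ∈ Θ;
hence so are KA and NKA (the conjunctions over any enumeration of Θ). -/
theorem KA_NKA_valid {P G : Type} [Countable P] [Finite G]
    {Θ : Set (Chain G)} (hΘ : Θ.Finite) (θ θ' : Chain G) (hθ : θ ∈ Θ) (hθ' : θ' ∈ Θ)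
    (φ : Formula P G) (hwf : WF Θ (Formula.A θ φ)) :
    Valid Θ ((Formula.A θ φ).imp (Formula.C θ' (Formula.A θ φ))) ∧
    Valid Θ (((Formula.A θ φ).neg).imp (Formula.C θ' ((Formula.A θ φ).neg))) ∧
    (∀ (θ₀ : Chain G) (l : List (Chain G)), (∀ x, x ∈ θ₀ :: l ↔ x ∈ Θ) →
      Valid Θ ((Formula.A θ φ).imp
        (conjList (Formula.C θ₀ (Formula.A θ φ))
          (l.map fun τ => Formula.C τ (Formula.A θ φ))))) ∧
    (∀ (θ₀ : Chain G) (l : List (Chain G)), (∀ x, x ∈ θ₀ :: l ↔ x ∈ Θ) →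
      Valid Θ (((Formula.A θ φ).neg).imp
        (conjList (Formula.C θ₀ ((Formula.A θ φ).neg))
          (l.map fun τ => Formula.C τ ((Formula.A θ φ).neg))))) :=
  KA_NKA_valid_general θ θ' φ

end ALPC
end

section
/- The axiom MIX is valid: for every chain θ ∈ Θ with last agent i and every formula φ for which the displayed formula is in the language, ⊨ C_θφ → φ ∧ [≈]_θ I_i C_θφ. -/
namespace ALPC

variable {P G : Type}

theorem Sat_imp (M : RawModel P G) (φ ψ : Formula P G) (w : M.W) :
    Sat M (φ.imp ψ) w ↔ (Sat M φ w → Sat M ψ w) := by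
  simp only [Formula.imp, Sat, not_and, not_not]

theorem RawModel.indist_refl (M : RawModel P G) (θ : Chain G) (w : M.W) : M.indist θ w w :=
  fun _ _ => Iff.rfl

theorem RawModel.creach_head {M : RawModel P G} {θ : Chain G} {x u y z : M.W}
    (hxu : M.indist θ x u) (huy : M.sim θ.last u y) (hyz : M.creach θ y z) :
    M.creach θ x z :=
  Relation.TransGen.head ⟨u, hxu, huy⟩ hyz

theorem AwModel.creach_refl {Θ : Set (Chain G)} (M : AwModel P G Θ) (θ : Chain G) (w : M.W) :
    M.creach θ w w :=
  Relation.TransGen.single ⟨w, M.indist_refl θ w, (M.sim_equiv θ.last).refl w⟩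

theorem Sat_box_K_C_of_Sat_C {M : RawModel P G} {θ : Chain G} {φ : Formula P G} {w : M.W}
    (hC : Sat M (.C θ φ) w) : Sat M (.box θ (.K θ.last (.C θ φ))) w :=
  fun _ hu _ hv _ hz => hC _ (RawModel.creach_head hu hv hz)

theorem MIX_valid_general {P G : Type}
    {Θ : Set (Chain G)} (θ : Chain G) (φ : Formula P G) :
    Valid Θ ((Formula.C θ φ).imp
      (φ.and (Formula.box θ (Formula.K (Chain.last θ) (Formula.C θ φ))))) := by
  intro M w
  rw [Sat_imp]
  intro hC
  exact ⟨hC w (M.creach_refl θ w), Sat_box_K_C_of_Sat_C hC⟩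

/-- the axiom MIX is valid: C_θφ → φ ∧ [≈]_θ I_i C_θφ, i the last agent of θ. -/
theorem MIX_valid {P G : Type} [Countable P] [Finite G]
    {Θ : Set (Chain G)} (hΘ : Θ.Finite) (θ : Chain G) (hθ : θ ∈ Θ) (φ : Formula P G)
    (hwf : WF Θ ((Formula.C θ φ).imp
      (φ.and (Formula.box θ (Formula.K (Chain.last θ) (Formula.C θ φ)))))) :
    Valid Θ ((Formula.C θ φ).imp
      (φ.and (Formula.box θ (Formula.K (Chain.last θ) (Formula.C θ φ))))) :=
  MIX_valid_general θ φ

end ALPC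
end

section
/- Lemma 1: for every formula φ of the language, the closure cl(φ) is a finite set of formulas. -/
namespace ALPC

variable {P G : Type}

/-!
Each rule generating cl(φ) either passes to subformulas or puts a bounded number of
operators on top of a formula of restricted shape. Hence cl(φ) lies in a set built in layers
from the subformulas S of φ and the chains T = Θ ∪ chains(φ): the core formulas
S ∪ {A_θ ψ | θ ∈ T, ψ ∈ S} and their negations; one layer of C_θ (θ ∈ T); two layers of
the introspection formulas m x, ¬m x, m m x, m ¬m x for m = I_i or m = [≈]_θ; one final
negation. Each layer is finite and closed under subformulas, and a formula headed by an
atom, A, C or E can only occur in the layer that introduced it, which is what the induction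
over cl(φ) needs to recover its components.
-/

section Subformulas

theorem Subf.trans {a b c : Formula P G} (hab : Subf a b) (hbc : Subf b c) : Subf a c := by
  induction hbc with
  | refl => exact hab
  | neg _ ih => exact .neg ih
  | andL _ ih => exact .andL ih
  | andR _ ih => exact .andR ih
  | K _ ih => exact .K ih
  | box _ ih => exact .box ih
  | C _ ih => exact .C ih
  | A _ ih => exact .A ih
  | E _ ih => exact .E ih

theorem subf_neg_iff {χ ψ : Formula P G} : Subf χ ψ.neg ↔ χ = ψ.neg ∨ Subf χ ψ := by
  constructor
  · intro h
    cases h with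
    | refl => exact Or.inl rfl
    | neg h => exact Or.inr h
  · rintro (rfl | h)
    exacts [.refl _, .neg h]

theorem subf_K_iff {χ ψ : Formula P G} {i : G} :
    Subf χ (.K i ψ) ↔ χ = .K i ψ ∨ Subf χ ψ := by
  constructor
  · intro h
    cases h with
    | refl => exact Or.inl rfl
    | K h => exact Or.inr h
  · rintro (rfl | h)
    exacts [.refl _, .K h]

theorem subf_box_iff {χ ψ : Formula P G} {θ : Chain G} :
    Subf χ (.box θ ψ) ↔ χ = .box θ ψ ∨ Subf χ ψ := by
  constructor
  · intro h
    cases h with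
    | refl => exact Or.inl rfl
    | box h => exact Or.inr h
  · rintro (rfl | h)
    exacts [.refl _, .box h]

theorem subf_C_iff {χ ψ : Formula P G} {θ : Chain G} :
    Subf χ (.C θ ψ) ↔ χ = .C θ ψ ∨ Subf χ ψ := by
  constructor
  · intro h
    cases h with
    | refl => exact Or.inl rfl
    | C h => exact Or.inr h
  · rintro (rfl | h)
    exacts [.refl _, .C h]

theorem subf_A_iff {χ ψ : Formula P G} {θ : Chain G} :
    Subf χ (.A θ ψ) ↔ χ = .A θ ψ ∨ Subf χ ψ := by
  constructor
  · intro h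
    cases h with
    | refl => exact Or.inl rfl
    | A h => exact Or.inr h
  · rintro (rfl | h)
    exacts [.refl _, .A h]

def Formula.subformulaList : Formula P G → List (Formula P G)
  | .atom p => [.atom p]
  | .neg ψ => .neg ψ :: ψ.subformulaList
  | .and ψ χ => .and ψ χ :: (ψ.subformulaList ++ χ.subformulaList)
  | .K i ψ => .K i ψ :: ψ.subformulaList
  | .box θ ψ => .box θ ψ :: ψ.subformulaList
  | .C θ ψ => .C θ ψ :: ψ.subformulaList
  | .A θ ψ => .A θ ψ :: ψ.subformulaList
  | .E θ ψ => .E θ ψ :: ψ.subformulaList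

theorem Subf.mem_subformulaList {χ ψ : Formula P G} (h : Subf χ ψ) :
    χ ∈ ψ.subformulaList := by
  induction h with
  | refl => cases χ <;> simp [Formula.subformulaList]
  | _ => simp_all [Formula.subformulaList]

theorem finite_setOf_subf (φ : Formula P G) : {χ | Subf χ φ}.Finite :=
  φ.subformulaList.finite_toSet.subset fun _ => Subf.mem_subformulaList

theorem Formula.chains_finite (φ : Formula P G) : φ.chains.Finite := by
  induction φ <;> simp_all [Formula.chains]

theorem Subf.chains_subset {χ ψ : Formula P G} (h : Subf χ ψ) : χ.chains ⊆ ψ.chains := by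
  induction h with
  | refl => rfl
  | _ => grind [Formula.chains]

end Subformulas

section Layers

variable (T : Set (Chain G))

def SubClosed (X : Set (Formula P G)) : Prop :=
  ∀ ⦃ψ⦄, ψ ∈ X → ∀ ⦃χ⦄, Subf χ ψ → χ ∈ X

def negClosure (X : Set (Formula P G)) : Set (Formula P G) := X ∪ Formula.neg '' X

def cLayer (X : Set (Formula P G)) : Set (Formula P G) := X ∪ Set.image2 Formula.C T X

def modalities : Set (Formula P G → Formula P G) := Set.range Formula.K ∪ Formula.box '' T

def introspection (m : Formula P G → Formula P G) (x : Formula P G) : Set (Formula P G) :=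
  {m x, (m x).neg, m (m x), m (m x).neg}

def introLayer (X : Set (Formula P G)) : Set (Formula P G) :=
  X ∪ ⋃ m ∈ modalities T, ⋃ x ∈ X, introspection m x

def Formula.isKOrBox : Formula P G → Prop
  | .K _ _ => True
  | .box _ _ => True
  | _ => False

variable {T}

theorem subf_of_mem_modalities {m : Formula P G → Formula P G} (hm : m ∈ modalities T)
    {χ ψ : Formula P G} (h : Subf χ (m ψ)) : χ = m ψ ∨ Subf χ ψ := by
  rcases hm with ⟨i, rfl⟩ | ⟨θ, -, rfl⟩
  exacts [subf_K_iff.1 h, subf_box_iff.1 h]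

theorem K_mem_modalities (i : G) : Formula.K i ∈ modalities (P := P) T :=
  Or.inl ⟨i, rfl⟩

theorem box_mem_modalities {θ : Chain G} (hθ : θ ∈ T) :
    Formula.box θ ∈ modalities (P := P) T :=
  Or.inr ⟨θ, hθ, rfl⟩

theorem isKOrBox_of_mem_modalities {m : Formula P G → Formula P G} (hm : m ∈ modalities T)
    (ψ : Formula P G) : (m ψ).isKOrBox := by
  rcases hm with ⟨i, rfl⟩ | ⟨θ, -, rfl⟩ <;> trivial

theorem subf_of_mem_introspection {m : Formula P G → Formula P G} (hm : m ∈ modalities T)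
    {x ψ χ : Formula P G} (hψ : ψ ∈ introspection m x) (h : Subf χ ψ) :
    χ ∈ introspection m x ∨ Subf χ x := by
  have hmx : ∀ {χ}, Subf χ (m x) → χ ∈ introspection m x ∨ Subf χ x := fun h =>
    (subf_of_mem_modalities hm h).imp (by rintro rfl; simp [introspection]) id
  have hnmx : ∀ {χ}, Subf χ (m x).neg → χ ∈ introspection m x ∨ Subf χ x := fun h =>
    (subf_neg_iff.1 h).elim (by rintro rfl; simp [introspection]) hmx
  simp only [introspection, Set.mem_insert_iff, Set.mem_singleton_iff] at hψ
  rcases hψ with rfl | rfl | rfl | rfl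
  · exact hmx h
  · exact hnmx h
  · exact (subf_of_mem_modalities hm h).elim (by rintro rfl; simp [introspection]) hmx
  · exact (subf_of_mem_modalities hm h).elim (by rintro rfl; simp [introspection]) hnmx

theorem SubClosed.negClosure {X : Set (Formula P G)} (hX : SubClosed X) :
    SubClosed (negClosure X) := by
  rintro _ (hψ | ⟨ψ, hψ, rfl⟩) χ h
  · exact Or.inl (hX hψ h)
  · rcases subf_neg_iff.1 h with rfl | h
    exacts [Or.inr ⟨ψ, hψ, rfl⟩, Or.inl (hX hψ h)]

theorem SubClosed.cLayer {X : Set (Formula P G)} (hX : SubClosed X) :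
    SubClosed (cLayer T X) := by
  rintro _ (hψ | ⟨θ, hθ, ψ, hψ, rfl⟩) χ h
  · exact Or.inl (hX hψ h)
  · rcases subf_C_iff.1 h with rfl | h
    exacts [Or.inr ⟨θ, hθ, ψ, hψ, rfl⟩, Or.inl (hX hψ h)]

theorem SubClosed.introLayer {X : Set (Formula P G)} (hX : SubClosed X) :
    SubClosed (introLayer T X) := by
  rintro ψ (hψ | hψ) χ h
  · exact Or.inl (hX hψ h)
  · simp only [Set.mem_iUnion] at hψ
    obtain ⟨m, hm, x, hx, hψ⟩ := hψ
    rcases subf_of_mem_introspection hm hψ h with h | h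
    · exact Or.inr (Set.mem_biUnion hm (Set.mem_biUnion hx h))
    · exact Or.inl (hX hx h)

theorem mem_of_mem_negClosure {X : Set (Formula P G)} {x : Formula P G}
    (hx : x ∈ negClosure X) (h : ¬ x.isNeg) : x ∈ X := by
  rcases hx with hx | ⟨y, -, rfl⟩
  exacts [hx, absurd trivial h]

theorem mem_of_mem_cLayer {X : Set (Formula P G)} {x : Formula P G}
    (hx : x ∈ cLayer T X) (h : ∀ θ y, x ≠ .C θ y) : x ∈ X := by
  rcases hx with hx | ⟨θ, -, y, -, rfl⟩
  exacts [hx, absurd rfl (h θ y)]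

theorem mem_of_mem_introLayer {X : Set (Formula P G)} {x : Formula P G}
    (hx : x ∈ introLayer T X) (hneg : ¬ x.isNeg) (hKB : ¬ x.isKOrBox) : x ∈ X := by
  rcases hx with hx | hx
  · exact hx
  simp only [Set.mem_iUnion] at hx
  obtain ⟨m, hm, y, -, hx⟩ := hx
  simp only [introspection, Set.mem_insert_iff, Set.mem_singleton_iff] at hx
  rcases hx with rfl | rfl | rfl | rfl
  all_goals first | exact absurd trivial hneg | exact absurd (isKOrBox_of_mem_modalities hm _) hKB

theorem modality_mem_introLayer {X : Set (Formula P G)} {m : Formula P G → Formula P G}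
    (hm : m ∈ modalities T) {x : Formula P G} (hx : x ∈ X) : m x ∈ introLayer T X :=
  Or.inr (Set.mem_biUnion hm (Set.mem_biUnion hx (by simp [introspection])))

theorem introspection_subset_introLayer {X : Set (Formula P G)} {m : Formula P G → Formula P G}
    (hm : m ∈ modalities T) {x : Formula P G} (hx : x ∈ X) :
    introspection m x ⊆ introLayer T X :=
  fun _ h => Or.inr (Set.mem_biUnion hm (Set.mem_biUnion hx h))

theorem negClosure_finite {X : Set (Formula P G)} (hX : X.Finite) : (negClosure X).Finite :=
  hX.union (hX.image _)

theorem cLayer_finite {X : Set (Formula P G)} (hT : T.Finite) (hX : X.Finite) :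
    (cLayer T X).Finite :=
  hX.union (hT.image2 _ hX)

theorem introLayer_finite [Finite G] {X : Set (Formula P G)} (hT : T.Finite) (hX : X.Finite) :
    (introLayer T X).Finite :=
  hX.union (((Set.finite_range _).union (hT.image _)).biUnion fun _ _ =>
    hX.biUnion fun _ _ => by unfold introspection; exact Set.toFinite _)

end Layers

section ClosureBound

def coreFormulas (T : Set (Chain G)) (S : Set (Formula P G)) : Set (Formula P G) :=
  negClosure (S ∪ Set.image2 Formula.A T S)

def closureBound (T : Set (Chain G)) (S : Set (Formula P G)) : Set (Formula P G) :=
  negClosure (introLayer T (introLayer T (cLayer T (coreFormulas T S))))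

variable {T : Set (Chain G)} {S : Set (Formula P G)}

theorem closureBound_finite [Finite G] (hT : T.Finite) (hS : S.Finite) :
    (closureBound T S).Finite :=
  negClosure_finite <| introLayer_finite hT <| introLayer_finite hT <| cLayer_finite hT <|
    negClosure_finite <| hS.union (hT.image2 _ hS)

theorem SubClosed.closureBound (hS : SubClosed S) : SubClosed (closureBound T S) := by
  have hcore : SubClosed (S ∪ Set.image2 Formula.A T S) := by
    rintro _ (hψ | ⟨θ, hθ, ψ, hψ, rfl⟩) χ h
    · exact Or.inl (hS hψ h)
    · rcases subf_A_iff.1 h with rfl | h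
      exacts [Or.inr ⟨θ, hθ, ψ, hψ, rfl⟩, Or.inl (hS hψ h)]
  exact hcore.negClosure.cLayer.introLayer.introLayer.negClosure

theorem subset_coreFormulas : S ⊆ coreFormulas T S :=
  fun _ hx => Or.inl (Or.inl hx)

theorem A_mem_coreFormulas {θ : Chain G} {ψ : Formula P G} (hθ : θ ∈ T) (hψ : ψ ∈ S) :
    Formula.A θ ψ ∈ coreFormulas T S :=
  Or.inl (Or.inr ⟨θ, hθ, ψ, hψ, rfl⟩)

theorem neg_A_mem_coreFormulas {θ : Chain G} {ψ : Formula P G} (hθ : θ ∈ T) (hψ : ψ ∈ S) :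
    (Formula.A θ ψ).neg ∈ coreFormulas T S :=
  Or.inr ⟨_, Or.inr ⟨θ, hθ, ψ, hψ, rfl⟩, rfl⟩

theorem introLayer_subset_closureBound :
    introLayer T (cLayer T (coreFormulas T S)) ⊆ closureBound T S :=
  fun _ hx => Or.inl (Or.inl hx)

theorem coreFormulas_subset_closureBound : coreFormulas T S ⊆ closureBound T S :=
  fun _ hx => introLayer_subset_closureBound (Or.inl (Or.inl hx))

theorem C_mem_closureBound {θ : Chain G} {x : Formula P G} (hθ : θ ∈ T)
    (hx : x ∈ coreFormulas T S) : Formula.C θ x ∈ closureBound T S :=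
  introLayer_subset_closureBound (Or.inl (Or.inr ⟨θ, hθ, x, hx, rfl⟩))

theorem introspection_subset_closureBound {m : Formula P G → Formula P G}
    (hm : m ∈ modalities T) {x : Formula P G}
    (hx : x ∈ introLayer T (cLayer T (coreFormulas T S))) :
    introspection m x ⊆ closureBound T S :=
  (introspection_subset_introLayer hm hx).trans Set.subset_union_left

theorem introspection_subset_closureBound_of_mem {m : Formula P G → Formula P G}
    (hm : m ∈ modalities T) {x : Formula P G} (hx : x ∈ S) :
    introspection m x ⊆ closureBound T S :=
  introspection_subset_closureBound hm (Or.inl (Or.inl (subset_coreFormulas hx)))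

theorem mem_cLayer_of_mem_closureBound {x : Formula P G} (hx : x ∈ closureBound T S)
    (hneg : ¬ x.isNeg) (hKB : ¬ x.isKOrBox) : x ∈ cLayer T (coreFormulas T S) :=
  mem_of_mem_introLayer
    (mem_of_mem_introLayer (mem_of_mem_negClosure hx hneg) hneg hKB) hneg hKB

theorem mem_of_mem_closureBound {x : Formula P G} (hx : x ∈ closureBound T S)
    (hneg : ¬ x.isNeg) (hKB : ¬ x.isKOrBox) (hC : ∀ θ y, x ≠ .C θ y)
    (hA : ∀ θ y, x ≠ .A θ y) : x ∈ S := by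
  have hx := mem_of_mem_cLayer (mem_cLayer_of_mem_closureBound hx hneg hKB) hC
  rcases mem_of_mem_negClosure hx hneg with hx | ⟨θ, -, y, -, rfl⟩
  exacts [hx, absurd rfl (hA θ y)]

variable (hS : SubClosed S) (hST : ∀ ψ ∈ S, ψ.chains ⊆ T)
include hS hST

theorem A_mem_closureBound_iff {θ : Chain G} {ψ : Formula P G} :
    Formula.A θ ψ ∈ closureBound T S ↔ θ ∈ T ∧ ψ ∈ S := by
  refine ⟨fun h => ?_, fun ⟨hθ, hψ⟩ =>
    coreFormulas_subset_closureBound (A_mem_coreFormulas hθ hψ)⟩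
  have h := mem_of_mem_cLayer (mem_cLayer_of_mem_closureBound h id id) (by simp)
  rcases mem_of_mem_negClosure h id with h | ⟨_, hθ, _, hψ, ⟨⟩⟩
  · exact ⟨hST _ h (Set.mem_insert θ _), hS h (.A (.refl ψ))⟩
  · exact ⟨hθ, hψ⟩

theorem C_mem_closureBound_iff {θ : Chain G} {ψ : Formula P G} :
    Formula.C θ ψ ∈ closureBound T S ↔ θ ∈ T ∧ ψ ∈ coreFormulas T S := by
  refine ⟨fun h => ?_, fun ⟨hθ, hψ⟩ => C_mem_closureBound hθ hψ⟩
  rcases mem_cLayer_of_mem_closureBound h id id with h | ⟨_, hθ, _, hψ, ⟨⟩⟩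
  · have h : Formula.C θ ψ ∈ S := by
      rcases mem_of_mem_negClosure h id with h | ⟨_, _, _, _, ⟨⟩⟩
      exact h
    exact ⟨hST _ h (Set.mem_insert θ _), subset_coreFormulas (hS h (.C (.refl ψ)))⟩
  · exact ⟨hθ, hψ⟩

theorem introspection_subset_closureBound_of_C_mem {m : Formula P G → Formula P G}
    (hm : m ∈ modalities T) {θ : Chain G} {ψ : Formula P G}
    (h : Formula.C θ ψ ∈ closureBound T S) :
    introspection m (Formula.C θ ψ) ⊆ closureBound T S :=
  have ⟨hθ, hψ⟩ := (C_mem_closureBound_iff hS hST).1 h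
  introspection_subset_closureBound hm (Or.inl (Or.inr ⟨θ, hθ, ψ, hψ, rfl⟩))

theorem introspection_box_K_subset_closureBound_of_C_mem (i : G) {θ : Chain G}
    {ψ : Formula P G} (h : Formula.C θ ψ ∈ closureBound T S) :
    introspection (Formula.box θ) (Formula.K i (Formula.C θ ψ)) ⊆ closureBound T S :=
  have ⟨hθ, hψ⟩ := (C_mem_closureBound_iff hS hST).1 h
  introspection_subset_closureBound (box_mem_modalities hθ)
    (modality_mem_introLayer (K_mem_modalities i) (Or.inr ⟨θ, hθ, ψ, hψ, rfl⟩))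

end ClosureBound

theorem subClosed_setOf_subf (φ : Formula P G) : SubClosed {χ | Subf χ φ} :=
  fun _ hψ _ hχ => hχ.trans hψ

theorem InCl.mem_closureBound {Θ : Set (Chain G)} {φ ψ : Formula P G} (h : InCl Θ φ ψ) :
    ψ ∈ closureBound (Θ ∪ φ.chains) {χ | Subf χ φ} := by
  have hS := subClosed_setOf_subf φ
  have hST : ∀ ψ ∈ {χ | Subf χ φ}, ψ.chains ⊆ Θ ∪ φ.chains :=
    fun _ hψ => hψ.chains_subset.trans Set.subset_union_right
  have hA {θ : Chain G} {χ : Formula P G} := A_mem_closureBound_iff (θ := θ) (ψ := χ) hS hST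
  induction h with
  | self => exact coreFormulas_subset_closureBound (subset_coreFormulas (.refl φ))
  | sub _ hχ ih => exact hS.closureBound ih hχ
  | neg _ hψ ih => exact Or.inr ⟨_, mem_of_mem_negClosure ih hψ, rfl⟩
  | CA θ' _ hθ' ih =>
    obtain ⟨hθ, hψ⟩ := hA.1 ih
    exact C_mem_closureBound (Or.inl hθ') (A_mem_coreFormulas hθ hψ)
  | CnA θ' _ hθ' ih =>
    obtain ⟨hθ, hψ⟩ := hA.1 ih
    exact C_mem_closureBound (Or.inl hθ') (neg_A_mem_coreFormulas hθ hψ)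
  | boxAtom _ _ ihA ihp =>
    exact introspection_subset_closureBound_of_mem (box_mem_modalities (hA.1 ihA).1)
      (mem_of_mem_closureBound ihp id id (by simp) (by simp)) (by simp [introspection])
  | Asub _ hχ ih =>
    obtain ⟨hθ, hψ⟩ := hA.1 ih
    exact hA.2 ⟨hθ, hS hψ hχ⟩
  | Achain θ' _ hθ' ih => exact hA.2 ⟨Or.inl hθ', (hA.1 ih).2⟩
  | @KK i _ hsub | @KnK i _ hsub =>
    exact introspection_subset_closureBound_of_mem (K_mem_modalities i)
      (hS hsub (.K (.refl _))) (by simp [introspection])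
  | boxbox hsub | boxnbox hsub =>
    exact introspection_subset_closureBound_of_mem
      (box_mem_modalities (hST _ hsub (Set.mem_insert _ _))) (hS hsub (.box (.refl _)))
      (by simp [introspection])
  | @CboxKC θ _ _ ih =>
    exact introspection_box_K_subset_closureBound_of_C_mem hS hST θ.last ih
      (by simp [introspection])
  | @KC1 i _ _ _ ih | @KC2 i _ _ _ ih =>
    exact introspection_subset_closureBound_of_C_mem hS hST (K_mem_modalities i)
      (hS.closureBound ih (.K (.refl _))) (by simp [introspection])
  | @boxKC1 _ i _ _ ih | @boxKC2 _ i _ _ ih =>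
    exact introspection_box_K_subset_closureBound_of_C_mem hS hST i
      (hS.closureBound ih (.box (.K (.refl _)))) (by simp [introspection])
  | EA _ ih =>
    have hE := mem_of_mem_closureBound ih id id (by simp) (by simp)
    exact hA.2 ⟨hST _ hE (Set.mem_insert _ _), hS hE (.E (.refl _))⟩
  | EC _ ih =>
    have hE := mem_of_mem_closureBound ih id id (by simp) (by simp)
    exact C_mem_closureBound (hST _ hE (Set.mem_insert _ _))
      (subset_coreFormulas (hS hE (.E (.refl _))))

theorem cl_finite_general {P G : Type} [Finite G]
    {Θ : Set (Chain G)} (hΘ : Θ.Finite) (φ : Formula P G) :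
    (cl Θ φ).Finite :=
  (closureBound_finite (hΘ.union φ.chains_finite) (finite_setOf_subf φ)).subset
    fun _ => InCl.mem_closureBound

/-- Lemma 1: for every formula φ of the language, cl(φ) is finite. -/
theorem cl_finite {P G : Type} [Countable P] [Finite G]
    {Θ : Set (Chain G)} (hΘ : Θ.Finite) (φ : Formula P G) (hwf : WF Θ φ) :
    (cl Θ φ).Finite :=
  cl_finite_general hΘ φ

end ALPC
end

section
/- Lemma 7: let Φ = cl(ψ) for some formula ψ, let Λ be a maximal consistent set in Φ, let θ ∈ Θ, and suppose C_θφ ∈ Φ and Γ ∈ W*_Λ. Then C_θφ ∈ Γ if and only if every (C_θ)_Λ-path from Γ is both a φ-path and a C_θφ-path. -/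
namespace ALPC

variable {P G : Type}

/-!
`C_θφ ∈ Γ` propagates along every step of a `(C_θ)_Λ`-path: by the axiom MIX a maximal
consistent set containing `C_θφ` also contains `[≈]_θ I_i C_θφ` (which lies in the closure),
and the two halves of a step strip off `[≈]_θ` and `I_i`. The first conjunct of MIX then puts
`φ` into every set of the path. Conversely, the trivial path `Γ` already contains `C_θφ`.
-/

section Deduction

variable {Θ : Set (Chain G)}

lemma propEval_imp {v : Formula P G → Bool} {a b : Formula P G} :
    propEval v (a.imp b) = true ↔ (propEval v a = true → propEval v b = true) := by
  show (!(propEval v a && !propEval v b)) = true ↔ _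
  cases propEval v a <;> cases propEval v b <;> decide

lemma propEval_and {v : Formula P G → Bool} {a b : Formula P G} :
    propEval v (a.and b) = true ↔ propEval v a = true ∧ propEval v b = true :=
  Bool.and_eq_true_iff

lemma propEval_conjList {v : Formula P G → Bool} {f : Formula P G} {l : List (Formula P G)} :
    propEval v (conjList f l) = true ↔ ∀ χ ∈ f :: l, propEval v χ = true := by
  induction l generalizing f with
  | nil => simp [conjList]
  | cons g t ih =>
    simp only [conjList, propEval_and, ih, List.forall_mem_cons]

lemma wf_conjList {f : Formula P G} {l : List (Formula P G)} :
    WF Θ (conjList f l) ↔ ∀ χ ∈ f :: l, WF Θ χ := by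
  induction l generalizing f with
  | nil => simp [conjList]
  | cons g t ih =>
    simp only [conjList, WF, ih, List.forall_mem_cons]

lemma Provable.wf {φ : Formula P G} (h : Provable Θ φ) : WF Θ φ := by
  induction h with
  | KA θ₀ l henum hwf | NKA θ₀ l henum hwf =>
    refine ⟨hwf, wf_conjList.mpr ?_⟩
    simp only [List.mem_cons, List.mem_map]
    rintro _ (rfl | ⟨θ', hθ', rfl⟩)
    · exact ⟨(henum θ₀).1 List.mem_cons_self, hwf⟩
    · exact ⟨(henum θ').1 (List.mem_cons_of_mem _ hθ'), hwf⟩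
  | mp _ _ ih => exact ih.2
  | necK _ ih => exact ih
  | necBox hθ _ ih | necC hθ _ ih => exact ⟨hθ, ih⟩
  | _ => assumption

lemma Provable.of_taut₂ {a b c : Formula P G}
    (htaut : ∀ v, propEval v a = true → propEval v b = true → propEval v c = true)
    (hc : WF Θ c) (ha : Provable Θ a) (hb : Provable Θ b) : Provable Θ c :=
  have hwf : WF Θ (a.imp (b.imp c)) := ⟨ha.wf, hb.wf, hc⟩
  ((Provable.taut (fun v => propEval_imp.mpr fun hav => propEval_imp.mpr (htaut v hav)) hwf).mp
    ha).mp hb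

lemma Provable.of_taut {a b : Formula P G}
    (htaut : ∀ v, propEval v a = true → propEval v b = true) (hb : WF Θ b)
    (ha : Provable Θ a) : Provable Θ b :=
  Provable.of_taut₂ (fun v hav _ => htaut v hav) hb ha ha

lemma Deduces.of_union_singleton_of_imp {X : Set (Formula P G)} {α β ξ : Formula P G}
    (hα : α ∈ X) (hαβ : Provable Θ (α.imp β)) (h : Deduces Θ (X ∪ {β}) ξ) : Deduces Θ X ξ := by
  classical
  obtain h | ⟨χ₀, l, hχ₀, hl, hpr⟩ := h
  · exact Or.inl h
  -- Replace `β` by `α` in the witness: since `α → β`, the new conjunction implies the old one.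
  let f : Formula P G → Formula P G := fun χ => if χ = β then α else χ
  have hfX : ∀ χ ∈ X ∪ {β}, f χ ∈ X := by
    intro χ hχ
    by_cases hχβ : χ = β
    · simpa [f, hχβ] using hα
    · simpa [f, hχβ] using hχ
  have hf_wf : ∀ χ, WF Θ χ → WF Θ (f χ) := by
    intro χ hχ
    by_cases hχβ : χ = β
    · simpa [f, hχβ] using hαβ.wf.1
    · simpa [f, hχβ] using hχ
  have hf_eval : ∀ v, propEval v (α.imp β) = true → ∀ χ,
      propEval v (f χ) = true → propEval v χ = true := by
    intro v hv χ hχ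
    by_cases hχβ : χ = β
    · subst hχβ
      simp only [f, if_true] at hχ
      exact propEval_imp.mp hv hχ
    · simpa [f, hχβ] using hχ
  refine Or.inr ⟨f χ₀, l.map f, hfX χ₀ hχ₀, by simpa using fun χ hχ => hfX χ (hl χ hχ), ?_⟩
  have hwf := hpr.wf
  refine Provable.of_taut₂ (fun v hv hprv => propEval_imp.mpr fun hconj => ?_) ?_ hαβ hpr
  · refine propEval_imp.mp hprv (propEval_conjList.mpr ?_)
    exact fun χ hχ => hf_eval v hv χ (propEval_conjList.mp hconj _ (List.mem_map_of_mem hχ))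
  · refine ⟨wf_conjList.mpr fun χ hχ => ?_, hwf.2⟩
    obtain ⟨χ', hχ', rfl⟩ := List.mem_map.mp (show χ ∈ (χ₀ :: l).map f from hχ)
    exact hf_wf χ' (wf_conjList.mp hwf.1 χ' hχ')

lemma Deduces.of_union_singleton_of_not_wf {X : Set (Formula P G)} {χ ξ : Formula P G}
    (hχ : ¬ WF Θ χ) (h : Deduces Θ (X ∪ {χ}) ξ) : Deduces Θ X ξ := by
  obtain h | ⟨χ₀, l, hχ₀, hl, hpr⟩ := h
  · exact Or.inl h
  have hwf := wf_conjList.mp hpr.wf.1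
  have hmem : ∀ χ' ∈ χ₀ :: l, χ' ∈ X := by
    intro χ' hχ'
    refine (List.forall_mem_cons.mpr ⟨hχ₀, hl⟩ χ' hχ').resolve_right ?_
    rintro rfl
    exact hχ (hwf _ hχ')
  exact Or.inr ⟨χ₀, l, hmem χ₀ List.mem_cons_self, fun χ' h => hmem χ' (.tail _ h), hpr⟩

lemma MCSIn.mem_of_deduces_union_singleton {Φ X : Set (Formula P G)} (hX : MCSIn Θ Φ X)
    {β : Formula P G} (hβ : β ∈ Φ) (h : ∀ ξ, Deduces Θ (X ∪ {β}) ξ → Deduces Θ X ξ) :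
    β ∈ X := by
  have hcons : ConsistentIn Θ Φ (X ∪ {β}) :=
    ⟨Set.union_subset hX.1.1 (Set.singleton_subset_iff.mpr hβ),
      fun ⟨ξ, h₁, h₂⟩ => hX.1.2 ⟨ξ, h ξ h₁, h _ h₂⟩⟩
  rw [← hX.2 _ hcons Set.subset_union_left]
  exact Set.mem_union_right _ rfl

lemma MCSIn.mem_of_provable_imp {Φ X : Set (Formula P G)} (hX : MCSIn Θ Φ X)
    {α β : Formula P G} (hα : α ∈ X) (hαβ : Provable Θ (α.imp β)) (hβ : β ∈ Φ) : β ∈ X :=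
  hX.mem_of_deduces_union_singleton hβ fun _ => Deduces.of_union_singleton_of_imp hα hαβ

/-- The closure is not restricted to the language, and an ill-formed formula occurs in no
provable formula, so it can never contribute to an inconsistency. -/
lemma MCSIn.mem_of_not_wf {Φ X : Set (Formula P G)} (hX : MCSIn Θ Φ X) {χ : Formula P G}
    (hχΦ : χ ∈ Φ) (hχ : ¬ WF Θ χ) : χ ∈ X :=
  hX.mem_of_deduces_union_singleton hχΦ fun _ => Deduces.of_union_singleton_of_not_wf hχ

end Deduction

section CommonBelief

variable {Θ : Set (Chain G)} {θ : Chain G} {φ : Formula P G}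

lemma provable_MIX (hθ : θ ∈ Θ) (hφ : WF Θ φ) :
    Provable Θ ((Formula.C θ φ).imp
      (φ.and (Formula.box θ (Formula.K θ.last (Formula.C θ φ))))) :=
  Provable.MIX ⟨⟨hθ, hφ⟩, hφ, hθ, hθ, hφ⟩

lemma provable_C_imp (hθ : θ ∈ Θ) (hφ : WF Θ φ) : Provable Θ ((Formula.C θ φ).imp φ) :=
  (provable_MIX hθ hφ).of_taut
    (fun _ h => propEval_imp.mpr fun hC => (propEval_and.mp (propEval_imp.mp h hC)).1)
    ⟨⟨hθ, hφ⟩, hφ⟩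

lemma provable_C_imp_box_K_C (hθ : θ ∈ Θ) (hφ : WF Θ φ) :
    Provable Θ ((Formula.C θ φ).imp (Formula.box θ (Formula.K θ.last (Formula.C θ φ)))) :=
  (provable_MIX hθ hφ).of_taut
    (fun _ h => propEval_imp.mpr fun hC => (propEval_and.mp (propEval_imp.mp h hC)).2)
    ⟨⟨hθ, hφ⟩, hθ, hθ, hφ⟩

lemma MCSIn.mem_of_C_mem {Φ X : Set (Formula P G)} (hX : MCSIn Θ Φ X) (hθ : θ ∈ Θ)
    (hφΦ : φ ∈ Φ) (hC : Formula.C θ φ ∈ X) : φ ∈ X := by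
  by_cases hφ : WF Θ φ
  · exact hX.mem_of_provable_imp hC (provable_C_imp hθ hφ) hφΦ
  · exact hX.mem_of_not_wf hφΦ hφ

lemma C_mem_of_stepL {Φ Λ X Y : Set (Formula P G)} (hXY : stepL Θ Φ Λ θ X Y) (hθ : θ ∈ Θ)
    (hCΦ : Formula.C θ φ ∈ Φ)
    (hboxΦ : Formula.box θ (Formula.K θ.last (Formula.C θ φ)) ∈ Φ)
    (hC : Formula.C θ φ ∈ X) : Formula.C θ φ ∈ Y := by
  by_cases hφ : WF Θ φ
  · obtain ⟨U, -, hXU, hUY⟩ := hXY.2.2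
    exact hUY _ (hXU _ (hXY.1.1.mem_of_provable_imp hC (provable_C_imp_box_K_C hθ hφ) hboxΦ))
  · exact hXY.2.1.1.mem_of_not_wf hCΦ fun h => hφ h.2

end CommonBelief

theorem C_mem_iff_paths_general {P G : Type}
    {Θ : Set (Chain G)} (ψ : Formula P G)
    (Φ Λ : Set (Formula P G)) (hΦ : Φ = cl Θ ψ)
    (θ : Chain G) (hθ : θ ∈ Θ) (φ : Formula P G) (hφ : Formula.C θ φ ∈ Φ)
    (Γ : Set (Formula P G)) (hΓ : Γ ∈ WL Θ Φ Λ) :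
    Formula.C θ φ ∈ Γ ↔
      ∀ rest : List (Set (Formula P G)), List.Chain (stepL Θ Φ Λ θ) Γ rest →
        (∀ X ∈ Γ :: rest, φ ∈ X) ∧ (∀ X ∈ Γ :: rest, Formula.C θ φ ∈ X) := by
  subst hΦ
  have hφΦ : φ ∈ cl Θ ψ := InCl.sub hφ (Subf.C (Subf.refl φ))
  have hboxΦ : Formula.box θ (Formula.K θ.last (Formula.C θ φ)) ∈ cl Θ ψ := InCl.CboxKC hφ
  refine ⟨fun hC rest hpath => ?_, fun h => (h [] (.singleton Γ)).2 Γ (List.mem_singleton_self Γ)⟩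
  have hpath_mem : ∀ X ∈ Γ :: rest, X ∈ WL Θ (cl Θ ψ) Λ ∧ Formula.C θ φ ∈ X :=
    List.IsChain.induction _ _ hpath
      (fun _ _ hXY hX => ⟨hXY.2.1, C_mem_of_stepL hXY hθ hφ hboxΦ hX.2⟩) fun _ => ⟨hΓ, hC⟩
  exact ⟨fun X hX => (hpath_mem X hX).1.1.mem_of_C_mem hθ hφΦ (hpath_mem X hX).2,
    fun X hX => (hpath_mem X hX).2⟩

/-- Lemma 7: for C_θφ ∈ Φ = cl(ψ) and Γ ∈ W*_Λ, C_θφ ∈ Γ iff every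
(C_θ)_Λ-path from Γ is both a φ-path and a C_θφ-path. -/
theorem C_mem_iff_paths {P G : Type} [Countable P] [Finite G]
    {Θ : Set (Chain G)} (hΘ : Θ.Finite) (ψ : Formula P G)
    (Φ Λ : Set (Formula P G)) (hΦ : Φ = cl Θ ψ) (hΛ : MCSIn Θ Φ Λ)
    (θ : Chain G) (hθ : θ ∈ Θ) (φ : Formula P G) (hφ : Formula.C θ φ ∈ Φ)
    (Γ : Set (Formula P G)) (hΓ : Γ ∈ WL Θ Φ Λ) :
    Formula.C θ φ ∈ Γ ↔
      ∀ rest : List (Set (Formula P G)), List.Chain (stepL Θ Φ Λ θ) Γ rest →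
        (∀ X ∈ Γ :: rest, φ ∈ X) ∧ (∀ X ∈ Γ :: rest, Formula.C θ φ ∈ X) :=
  C_mem_iff_paths_general ψ Φ Λ hΦ θ hθ φ hφ Γ hΓ

end ALPC
end
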